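/- Let f : X → S¹ be a Darboux injection from a compact connected Hausdorff space X to the circle S¹. Then for every point x ∈ X the subspace X \ {x} has at most two connected components; moreover, for every connected component C of X \ {x}, the point x belongs to the closure of C in X and f(x) belongs to the closure of f(C) in S¹. -/

import Mathlib

/-!
By the boundary bumping theorem (via the Šura-Bura lemma), `x` lies in the closure of every
component `C` of `X \ {x}`; since `C ∪ {x}` is then connected, the Darboux property gives
`f x ∈ closure (f '' C)`. Stereographic projection from `f x` identifies `S¹ \ {f x}` with `ℝ`,
turning the images of the components into intervals that are pairwise disjoint (by injectivity)
and unbounded (as `f x` lies in the closure of each). Of any three such intervals two are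
unbounded in the same direction and hence meet, so there are at most two components.
-/

open Set Bornology

theorem exists_isClopen_of_connectedComponent_subset {α : Type*} [TopologicalSpace α]
    [T2Space α] [CompactSpace α] {x : α} {U : Set α} (hU : IsOpen U)
    (h : connectedComponent x ⊆ U) : ∃ Z : Set α, IsClopen Z ∧ x ∈ Z ∧ Z ⊆ U := by
  -- The clopen neighbourhoods of `x` intersect to its component, so finitely many of them
  -- already miss the compact set `Uᶜ`.
  have H := hU.isClosed_compl.isCompact.inter_iInter_nonempty
    (fun s : { s : Set α // IsClopen s ∧ x ∈ s } => (s : Set α)) fun s => s.2.1.1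
  rw [← not_disjoint_iff_nonempty_inter, imp_not_comm, not_forall] at H
  obtain ⟨si, hsi⟩ := H <| by
    rw [← connectedComponent_eq_iInter_isClopen]
    exact disjoint_compl_left_iff_subset.2 h
  refine ⟨⋂ s ∈ si, (s : Set α), isClopen_biInter_finset fun s _ => s.2.1,
    mem_iInter₂.2 fun s _ => s.2.2, ?_⟩
  rwa [← disjoint_compl_left_iff_subset, disjoint_iff_inter_eq_empty,
    ← not_nonempty_iff_eq_empty]

theorem IsClosed.exists_isClopen_of_connectedComponentIn_subset {α : Type*}
    [TopologicalSpace α] [T2Space α] [CompactSpace α] {K V : Set α} (hK : IsClosed K)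
    (hV : IsOpen V) (hVK : V ⊆ K) {x : α} (hx : x ∈ K) (h : connectedComponentIn K x ⊆ V) :
    ∃ Z : Set α, IsClopen Z ∧ x ∈ Z ∧ Z ⊆ V := by
  have : CompactSpace K := isCompact_iff_compactSpace.mp hK.isCompact
  obtain ⟨Z, hZ, hxZ, hZV⟩ := exists_isClopen_of_connectedComponent_subset (x := ⟨x, hx⟩)
    (hV.preimage continuous_subtype_val)
    (by rwa [← image_subset_iff, ← connectedComponentIn_eq_image hx])
  obtain ⟨O, hO, rfl⟩ := isOpen_induced_iff.mp hZ.isOpen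
  refine ⟨O ∩ V, ⟨?_, hO.inter hV⟩, ⟨hxZ, h (mem_connectedComponentIn hx)⟩, inter_subset_right⟩
  have hOV : O ∩ V = Subtype.val '' (Subtype.val ⁻¹' O : Set K) := by
    ext z
    exact ⟨fun hz => ⟨⟨z, hVK hz.2⟩, hz.1, rfl⟩, by rintro ⟨z, hz, rfl⟩; exact ⟨hz, hZV hz⟩⟩
  rw [hOV]
  exact hK.isClosedEmbedding_subtypeVal.isClosedMap _ hZ.isClosed

theorem isClosed_connectedComponentIn_compl_of_notMem_closure {X : Type*}
    [TopologicalSpace X] {x y : X} (hx : x ∉ closure (connectedComponentIn {x}ᶜ y)) :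
    IsClosed (connectedComponentIn {x}ᶜ y) := by
  rcases (connectedComponentIn {x}ᶜ y).eq_empty_or_nonempty with h | ⟨z, hz⟩
  · exact h ▸ isClosed_empty
  rw [connectedComponentIn_eq hz] at hx ⊢
  refine isClosed_of_closure_subset <| isPreconnected_connectedComponentIn.closure
    |>.subset_connectedComponentIn (subset_closure (mem_connectedComponentIn ?_)) ?_
  · exact connectedComponentIn_subset _ _ hz
  · rintro w hw rfl
    exact hx hw

theorem mem_closure_connectedComponentIn_compl {X : Type*} [TopologicalSpace X]
    [CompactSpace X] [ConnectedSpace X] [T2Space X] {x y : X} (hy : y ≠ x) :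
    x ∈ closure (connectedComponentIn {x}ᶜ y) := by
  set C := connectedComponentIn {x}ᶜ y
  by_contra hx
  have hyC : y ∈ C := mem_connectedComponentIn hy
  obtain ⟨V, W, hV, hW, hCV, hxW, hVW⟩ := SeparatedNhds.of_isCompact_isCompact
    (isClosed_connectedComponentIn_compl_of_notMem_closure hx).isCompact isCompact_singleton
    (disjoint_singleton_right.2 fun hxC => connectedComponentIn_subset _ _ hxC rfl)
  have hxK : x ∉ closure V := fun h => (hVW.closure_left hW).ne_of_mem h (hxW rfl) rfl
  have hCK : connectedComponentIn (closure V) y = C :=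
    (isPreconnected_connectedComponentIn.subset_connectedComponentIn
      (mem_connectedComponentIn (subset_closure (hCV hyC)))
      fun z hz (hzx : z = x) => hxK (hzx ▸ connectedComponentIn_subset _ _ hz)).antisymm
    (isPreconnected_connectedComponentIn.subset_connectedComponentIn hyC
      (hCV.trans subset_closure))
  obtain ⟨Z, hZ, hyZ, hZV⟩ := isClosed_closure.exists_isClopen_of_connectedComponentIn_subset
    hV subset_closure (subset_closure (hCV hyC)) (hCK ▸ hCV)
  rcases isClopen_iff.mp hZ with rfl | rfl
  · exact hyZ
  · exact hxK (subset_closure (hZV (mem_univ x)))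

theorem mem_closure_of_isPreconnected_insert {Y : Type*} [TopologicalSpace Y] [T1Space Y]
    {a : Y} {S : Set Y} (h : IsPreconnected (insert a S)) (hS : S.Nonempty) :
    a ∈ closure S := by
  by_contra ha
  have haS : a ∉ S := fun h => ha (subset_closure h)
  obtain ⟨s, hs⟩ := hS
  obtain ⟨z, hz, hzS, hza⟩ := h _ _ isClosed_closure.isOpen_compl isOpen_compl_singleton
    (insert_subset (Or.inl ha) fun z hz => Or.inr fun (hza : z = a) => haS (hza ▸ hz))
    ⟨a, mem_insert _ _, ha⟩ ⟨s, mem_insert_of_mem _ hs, fun (hsa : s = a) => haS (hsa ▸ hs)⟩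
  rcases hz with rfl | hz
  exacts [hza rfl, hzS (subset_closure hz)]

def IsDarboux {X Y : Type*} [TopologicalSpace X] [TopologicalSpace Y] (f : X → Y) : Prop :=
  ∀ C : Set X, IsPreconnected C → IsPreconnected (f '' C)

theorem IsDarboux.mem_closure_image {X Y : Type*} [TopologicalSpace X] [TopologicalSpace Y]
    [T1Space Y] {f : X → Y} (hf : IsDarboux f) {C : Set X} (hC : IsPreconnected C)
    (hne : C.Nonempty) {x : X} (hx : x ∈ closure C) : f x ∈ closure (f '' C) := by
  refine mem_closure_of_isPreconnected_insert ?_ (hne.image f)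
  rw [← image_insert_eq]
  exact hf _ (hC.subset_closure (subset_insert _ _) (insert_subset hx subset_closure))

theorem Set.OrdConnected.inter_nonempty_of_not_bddAbove {α : Type*} [LinearOrder α]
    [Nonempty α] {s t : Set α} (hs : s.OrdConnected) (ht : t.OrdConnected)
    (hs' : ¬BddAbove s) (ht' : ¬BddAbove t) : (s ∩ t).Nonempty := by
  rw [not_bddAbove_iff] at hs' ht'
  obtain ⟨a, ha, -⟩ := hs' (Classical.arbitrary α)
  obtain ⟨b, hb, -⟩ := ht' (Classical.arbitrary α)
  obtain ⟨a', ha', haa'⟩ := hs' (max a b)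
  obtain ⟨b', hb', hbb'⟩ := ht' (max a b)
  exact ⟨max a b, hs.out ha ha' ⟨le_max_left _ _, haa'.le⟩,
    ht.out hb hb' ⟨le_max_right _ _, hbb'.le⟩⟩

theorem Set.OrdConnected.inter_nonempty_of_not_bddBelow {α : Type*} [LinearOrder α]
    [Nonempty α] {s t : Set α} (hs : s.OrdConnected) (ht : t.OrdConnected)
    (hs' : ¬BddBelow s) (ht' : ¬BddBelow t) : (s ∩ t).Nonempty :=
  hs.dual.inter_nonempty_of_not_bddAbove (α := αᵒᵈ) ht.dual hs' ht'

theorem Set.OrdConnected.inter_nonempty_of_unbounded₃ {α : Type*} [LinearOrder α]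
    [Nonempty α] {s t u : Set α} (hs : s.OrdConnected) (ht : t.OrdConnected)
    (hu : u.OrdConnected) (hs' : ¬BddBelow s ∨ ¬BddAbove s) (ht' : ¬BddBelow t ∨ ¬BddAbove t)
    (hu' : ¬BddBelow u ∨ ¬BddAbove u) :
    (s ∩ t).Nonempty ∨ (s ∩ u).Nonempty ∨ (t ∩ u).Nonempty := by
  rcases hs' with hs' | hs' <;> rcases ht' with ht' | ht' <;> rcases hu' with hu' | hu' <;>
  first
  | exact .inl (hs.inter_nonempty_of_not_bddBelow ht hs' ht')
  | exact .inl (hs.inter_nonempty_of_not_bddAbove ht hs' ht')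
  | exact .inr (.inl (hs.inter_nonempty_of_not_bddBelow hu hs' hu'))
  | exact .inr (.inl (hs.inter_nonempty_of_not_bddAbove hu hs' hu'))
  | exact .inr (.inr (ht.inter_nonempty_of_not_bddBelow hu ht' hu'))
  | exact .inr (.inr (ht.inter_nonempty_of_not_bddAbove hu ht' hu'))

theorem OpenPartialHomeomorph.not_isBounded_image_of_mem_closure {α β : Type*}
    [TopologicalSpace α] [T2Space α] [PseudoMetricSpace β] [ProperSpace β]
    (e : OpenPartialHomeomorph α β) (he : e.target = univ) {S : Set α} (hS : S ⊆ e.source)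
    {a : α} (ha : a ∉ e.source) (haS : a ∈ closure S) : ¬IsBounded (e '' S) := by
  intro hb
  have hK : IsCompact (e.symm '' closure (e '' S)) :=
    hb.isCompact_closure.image_of_continuousOn (e.continuousOn_symm.mono (he ▸ subset_univ _))
  have hSK : S ⊆ e.symm '' closure (e '' S) := fun s hs =>
    ⟨e s, subset_closure (mem_image_of_mem e hs), e.left_inv (hS hs)⟩
  obtain ⟨b, -, rfl⟩ := hK.isClosed.closure_subset_iff.2 hSK haS
  exact ha (e.map_target (he ▸ mem_univ b))

theorem exists_openPartialHomeomorph_circle_real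
    (v : Metric.sphere (0 : EuclideanSpace ℝ (Fin 2)) 1) :
    ∃ e : OpenPartialHomeomorph (Metric.sphere (0 : EuclideanSpace ℝ (Fin 2)) 1) ℝ,
      e.source = {v}ᶜ ∧ e.target = univ := by
  have : Fact (Module.finrank ℝ (EuclideanSpace ℝ (Fin 2)) = 1 + 1) := ⟨by simp⟩
  refine ⟨(stereographic' 1 v).transHomeomorph
    ((EuclideanSpace.equiv (Fin 1) ℝ).toHomeomorph.trans (Homeomorph.funUnique (Fin 1) ℝ)),
    stereographic'_source v, ?_⟩
  simp

theorem connectedComponentIn_eq_of_image_inter_nonempty {X Z : Type*} [TopologicalSpace X]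
    {F : Set X} {g : X → Z} (hg : InjOn g F) {y z : X}
    (h : (g '' connectedComponentIn F y ∩ g '' connectedComponentIn F z).Nonempty) :
    connectedComponentIn F y = connectedComponentIn F z := by
  obtain ⟨-, ⟨p, hp, rfl⟩, ⟨q, hq, hpq⟩⟩ := h
  rw [connectedComponentIn_eq hp, ← hg (connectedComponentIn_subset _ _ hq)
    (connectedComponentIn_subset _ _ hp) hpq, ← connectedComponentIn_eq hq]

/-- Let `f : X → S¹` be a Darboux injection from a compact connected Hausdorff space `X`
to the circle. Then for every `x ∈ X` the subspace `X \ {x}` has at most two connected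
components, and every connected component `C` of `X \ {x}` satisfies `x ∈ closure C`
and `f x ∈ closure (f '' C)`. -/
theorem darboux_injection_to_circle_components {X : Type*} [TopologicalSpace X]
    [CompactSpace X] [ConnectedSpace X] [T2Space X]
    (f : X → (Metric.sphere (0 : EuclideanSpace ℝ (Fin 2)) 1))
    (hinj : Function.Injective f)
    (hdarboux : ∀ C : Set X, IsPreconnected C → IsPreconnected (f '' C)) (x : X) :
    (∀ y₁ y₂ y₃, y₁ ≠ x → y₂ ≠ x → y₃ ≠ x →
      connectedComponentIn {x}ᶜ y₁ = connectedComponentIn {x}ᶜ y₂ ∨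
      connectedComponentIn {x}ᶜ y₁ = connectedComponentIn {x}ᶜ y₃ ∨
      connectedComponentIn {x}ᶜ y₂ = connectedComponentIn {x}ᶜ y₃) ∧
    (∀ y, y ≠ x → x ∈ closure (connectedComponentIn {x}ᶜ y) ∧
      f x ∈ closure (f '' connectedComponentIn {x}ᶜ y)) := by
  have hclosure : ∀ y, y ≠ x → x ∈ closure (connectedComponentIn {x}ᶜ y) ∧
      f x ∈ closure (f '' connectedComponentIn {x}ᶜ y) := fun y hy =>
    have hx := mem_closure_connectedComponentIn_compl hy
    ⟨hx, IsDarboux.mem_closure_image hdarboux isPreconnected_connectedComponentIn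
      ⟨y, mem_connectedComponentIn hy⟩ hx⟩
  refine ⟨fun y₁ y₂ y₃ h₁ h₂ h₃ => ?_, hclosure⟩
  obtain ⟨e, he_source, he_target⟩ := exists_openPartialHomeomorph_circle_real (f x)
  have hmaps : MapsTo f {x}ᶜ e.source := he_source ▸ fun y hy hfy => hy (hinj hfy)
  have hunbdd : ∀ y, y ≠ x → ((e ∘ f) '' connectedComponentIn {x}ᶜ y).OrdConnected ∧
      (¬BddBelow ((e ∘ f) '' connectedComponentIn {x}ᶜ y) ∨
        ¬BddAbove ((e ∘ f) '' connectedComponentIn {x}ᶜ y)) := by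
    intro y hy
    have hsub : f '' connectedComponentIn {x}ᶜ y ⊆ e.source :=
      (hmaps.mono_left (connectedComponentIn_subset _ _)).image_subset
    have hunbdd := e.not_isBounded_image_of_mem_closure he_target hsub
      (by simp [he_source]) (hclosure y hy).2
    rw [isBounded_iff_bddBelow_bddAbove, not_and_or] at hunbdd
    rw [image_comp]
    exact ⟨((hdarboux _ isPreconnected_connectedComponentIn).image _
      (e.continuousOn.mono hsub)).ordConnected, hunbdd⟩
  obtain ⟨ho₁, hu₁⟩ := hunbdd y₁ h₁
  obtain ⟨ho₂, hu₂⟩ := hunbdd y₂ h₂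
  obtain ⟨ho₃, hu₃⟩ := hunbdd y₃ h₃
  have hinjOn : InjOn (e ∘ f) {x}ᶜ := e.injOn.comp hinj.injOn hmaps
  refine (ho₁.inter_nonempty_of_unbounded₃ ho₂ ho₃ hu₁ hu₂ hu₃).imp ?_ (Or.imp ?_ ?_) <;>
    exact connectedComponentIn_eq_of_image_inter_nonempty hinjOn
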